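/- For all real x and y, Im P(x + iy) = (y/9)·(9y⁴ − (90x² + 48√5·x + 38)y² + 45x⁴ + 48√5·x³ + 114x² + 24√5·x + 9). Moreover, for every real x < −√5/3, setting y = 2/3 − ((3+√5)/2)(x + √5/3), one has Im P(x + iy) < 0; that is, P maps ℓ₊ ∖ {c₊} into the open lower half-plane. -/

import Mathlib

open Complex

/-- The polynomial `P(z) = z (1 + (2√5/3) z + z²)²`. -/
noncomputable def P (z : ℂ) : ℂ :=
  z * (1 + ((2 * Real.sqrt 5 / 3 : ℝ) : ℂ) * z + z ^ 2) ^ 2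

/-!
The roots of `1 + (2√5/3) z + z²` are `c₊` and `c₋`, so `c₊` is a double zero of `P`, and `ℓ₊`
leaves `c₊` in a direction `v` for which `c₊ v²` is real. Hence the quadratic term of `Im P`
along `ℓ₊` vanishes: writing `x = t - √5/3` with `t < 0`, the quartic factor of `Im P` becomes
`t³ ((54 - 6√5) - (117 + 81√5) t / 2)`, a negative cubic times a positive linear factor,
while the prefactor `y / 9` is positive.
-/

theorem P_im (x y : ℝ) : (P (x + y * I)).im =
    y / 9 * (9 * y ^ 4 - (90 * x ^ 2 + 48 * Real.sqrt 5 * x + 38) * y ^ 2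
      + 45 * x ^ 4 + 48 * Real.sqrt 5 * x ^ 3 + 114 * x ^ 2
      + 24 * Real.sqrt 5 * x + 9) := by
  have hs : Real.sqrt 5 ^ 2 = 5 := Real.sq_sqrt (by norm_num)
  simp only [P, pow_two, mul_im, mul_re, add_im, add_re, ofReal_re, ofReal_im, I_re, I_im,
    one_re, one_im]
  grind

theorem quartic_factor_on_halfLine {s : ℝ} (hs : s ^ 2 = 5) (t : ℝ) :
    let x := t - s / 3
    let y := 2 / 3 - (3 + s) / 2 * t
    9 * y ^ 4 - (90 * x ^ 2 + 48 * s * x + 38) * y ^ 2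
        + 45 * x ^ 4 + 48 * s * x ^ 3 + 114 * x ^ 2 + 24 * s * x + 9
      = t ^ 3 * ((54 - 6 * s) - (117 + 81 * s) / 2 * t) := by
  intro x y
  grind

theorem quartic_factor_on_halfLine_neg {t : ℝ} (ht : t < 0) :
    let s := Real.sqrt 5
    let x := t - s / 3
    let y := 2 / 3 - (3 + s) / 2 * t
    9 * y ^ 4 - (90 * x ^ 2 + 48 * s * x + 38) * y ^ 2
        + 45 * x ^ 4 + 48 * s * x ^ 3 + 114 * x ^ 2 + 24 * s * x + 9 < 0 := by
  intro s x y
  have hs : s ^ 2 = 5 := Real.sq_sqrt (by norm_num)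
  have hs_pos : 0 < s := Real.sqrt_pos.mpr (by norm_num)
  have hs_lt : s < 9 := by nlinarith
  rw [quartic_factor_on_halfLine hs t]
  have hcube : t ^ 3 < 0 := Odd.pow_neg (by decide) ht
  have hlin : 0 < (54 - 6 * s) - (117 + 81 * s) / 2 * t := by nlinarith
  exact mul_neg_of_neg_of_pos hcube hlin

theorem stmt4 :
    (∀ x y : ℝ, (P ((x : ℂ) + (y : ℂ) * I)).im =
      y / 9 * (9 * y ^ 4 - (90 * x ^ 2 + 48 * Real.sqrt 5 * x + 38) * y ^ 2
        + 45 * x ^ 4 + 48 * Real.sqrt 5 * x ^ 3 + 114 * x ^ 2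
        + 24 * Real.sqrt 5 * x + 9)) ∧
    (∀ x : ℝ, x < -Real.sqrt 5 / 3 →
      (P ((x : ℂ) +
        ((2 / 3 - (3 + Real.sqrt 5) / 2 * (x + Real.sqrt 5 / 3) : ℝ) : ℂ) * I)).im < 0) := by
  refine ⟨P_im, fun x hx => ?_⟩
  set t := x + Real.sqrt 5 / 3 with ht_def
  have ht : t < 0 := by linarith
  have hx : x = t - Real.sqrt 5 / 3 := by linarith
  have hy : 0 < 2 / 3 - (3 + Real.sqrt 5) / 2 * t := by
    nlinarith [Real.sqrt_nonneg 5]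
  rw [P_im, hx]
  exact mul_neg_of_pos_of_neg (by positivity) (quartic_factor_on_halfLine_neg ht)
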